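/- arXiv:2202.13360 — 2 statements merged into one kernel-verified Lean document; each statement's English description precedes it below -/
import Mathlib

section
/- Let X be an integral scheme, E a locally free sheaf of rank n on X, and φ : E → E an O_X-linear endomorphism such that for every closed point y of X the induced endomorphism φ(y) of the fiber E ⊗ κ(y) is nilpotent (equivalently, φ(y)^n = 0). Then φ^n = 0 as an endomorphism of E. -/
open TensorProduct

/-!
A finite type domain over a field is a Jacobson ring, so its maximal ideals intersect to zero.
If `φ(𝔪)ⁿ = 0` then `φⁿ` maps `M` into `𝔪 M` for every maximal `𝔪`, so every linear form
`f : M → R` sends the image of `φⁿ` into the Jacobson radical, which is zero. Linear forms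
separate the points of a projective module, hence `φⁿ = 0`.
-/

theorem Ideal.jacobson_bot_eq_bot_of_isReduced {R : Type*} [CommRing R] [IsJacobsonRing R]
    [IsReduced R] : (⊥ : Ideal R).jacobson = ⊥ :=
  IsJacobsonRing.out' ⊥ Ideal.isRadical_bot

theorem LinearMap.mem_smul_top_of_baseChange_quotient_eq_zero {R M N : Type*} [CommRing R]
    [AddCommGroup M] [Module R M] [AddCommGroup N] [Module R N] (I : Ideal R) {f : M →ₗ[R] N}
    (hf : f.baseChange (R ⧸ I) = 0) (x : M) : f x ∈ I • (⊤ : Submodule R N) := by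
  rw [← Submodule.Quotient.mk_eq_zero, ← quotTensorEquivQuotSMul_mk_one_tmul,
    ← baseChange_tmul, hf, LinearMap.zero_apply, map_zero]

theorem Module.Projective.eq_zero_of_forall_isMaximal_mem_smul_top {R M : Type*} [CommRing R]
    [AddCommGroup M] [Module R M] [Module.Projective R M] (hR : (⊥ : Ideal R).jacobson = ⊥)
    {x : M} (hx : ∀ 𝔪 : Ideal R, 𝔪.IsMaximal → x ∈ 𝔪 • (⊤ : Submodule R M)) : x = 0 := by
  refine (Module.forall_dual_apply_eq_zero_iff R x).mp fun f => ?_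
  have hf_mem : ∀ 𝔪 : Ideal R, 𝔪.IsMaximal → f x ∈ 𝔪 := fun 𝔪 h𝔪 => by
    have h := Submodule.smul_top_le_comap_smul_top 𝔪 f (hx 𝔪 h𝔪)
    rwa [Submodule.mem_comap, smul_eq_mul, Ideal.mul_top] at h
  have : f x ∈ (⊥ : Ideal R).jacobson :=
    Ideal.mem_sInf.mpr fun 𝔪 h𝔪 => hf_mem 𝔪 h𝔪.2
  rwa [hR, Ideal.mem_bot] at this

theorem endo_nilpotent_of_fiberwise_nilpotent_general {k : Type} [Field k]
    (R : Type) [CommRing R] [IsDomain R] [Algebra k R] (hft : Algebra.FiniteType k R)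
    (M : Type) [AddCommGroup M] [Module R M] [Module.Projective R M]
    (n : ℕ)
    (φ : M →ₗ[R] M)
    (hfib : ∀ 𝔪 : Ideal R, 𝔪.IsMaximal → (LinearMap.baseChange (R ⧸ 𝔪) φ) ^ n = 0) :
    (φ ^ n : Module.End R M) = 0 := by
  have : IsJacobsonRing R := isJacobsonRing_of_finiteType (A := k)
  ext x
  refine Module.Projective.eq_zero_of_forall_isMaximal_mem_smul_top
    (Ideal.jacobson_bot_eq_bot_of_isReduced (R := R)) fun 𝔪 h𝔪 => ?_
  exact LinearMap.mem_smul_top_of_baseChange_quotient_eq_zero 𝔪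
    (by rw [LinearMap.baseChange_pow, hfib 𝔪 h𝔪]) x

/-- (in the affine incarnation: an integral scheme of finite type over an
algebraically closed field `k` is covered by spectra of integral finite type `k`-algebras `R`,
a locally free sheaf of rank `n` corresponds to a finite projective `R`-module `M` of constant
fiber rank `n`, closed points correspond to maximal ideals, and the fiber of `E` at a closed
point `𝔪` is `M ⊗_R R/𝔪`).

Let `R` be an integral domain of finite type over an algebraically closed field `k`, let `M`
be a finite projective `R`-module whose fiber at every maximal ideal `𝔪` has dimension `n`
over `R/𝔪`, and let `φ : M → M` be an `R`-linear endomorphism such that for every maximal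
ideal `𝔪` the induced endomorphism `φ(𝔪)` of the fiber `M ⊗ R/𝔪` is nilpotent (equivalently,
`φ(𝔪)^n = 0`). Then `φ^n = 0` as an endomorphism of `M`. -/
theorem endo_nilpotent_of_fiberwise_nilpotent {k : Type} [Field k] [IsAlgClosed k]
    (R : Type) [CommRing R] [IsDomain R] [Algebra k R] (hft : Algebra.FiniteType k R)
    (M : Type) [AddCommGroup M] [Module R M] [Module.Finite R M] [Module.Projective R M]
    (n : ℕ)
    (hrank : ∀ 𝔪 : Ideal R, 𝔪.IsMaximal → Module.finrank (R ⧸ 𝔪) ((R ⧸ 𝔪) ⊗[R] M) = n)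
    (φ : M →ₗ[R] M)
    (hfib : ∀ 𝔪 : Ideal R, 𝔪.IsMaximal → (LinearMap.baseChange (R ⧸ 𝔪) φ) ^ n = 0) :
    (φ ^ n : Module.End R M) = 0 :=
  endo_nilpotent_of_fiberwise_nilpotent_general R hft M n φ hfib
end

section
/- Let X be a Noetherian normal integral scheme and Z ⊆ X a closed subset of codimension at least 2. Then the restriction map Γ(X, O_X) → Γ(X \ Z, O_X) is an isomorphism (algebraic Hartogs' lemma). -/
open AlgebraicGeometry CategoryTheory TopologicalSpace

open scoped nonZeroDivisors

section Alg

variable {A : Type*} [CommRing A] {K : Type*} [Field K] [Algebra A K]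

/-- The denominator ideal of `f : K`. -/
def hartogsDen (f : K) : Ideal A where
  carrier := {a | ∃ b : A, algebraMap A K a * f = algebraMap A K b}
  zero_mem' := ⟨0, by simp⟩
  add_mem' := by
    rintro a b ⟨c, hc⟩ ⟨d, hd⟩
    exact ⟨c + d, by rw [map_add, map_add, add_mul, hc, hd]⟩
  smul_mem' := by
    rintro c a ⟨b, hb⟩
    exact ⟨c * b, by rw [smul_eq_mul, map_mul, map_mul, mul_assoc, hb]⟩

lemma mem_hartogsDen {f : K} {a : A} :
    a ∈ (hartogsDen f : Ideal A) ↔ ∃ b : A, algebraMap A K a * f = algebraMap A K b :=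
  Iff.rfl

variable [IsDomain A] [IsNoetherianRing A] [IsFractionRing A K]

theorem dim_le_one_of_principal_maximal {R : Type*} [CommRing R] [IsDomain R] [IsNoetherianRing R]
    [IsLocalRing R] (α : R) (hm : IsLocalRing.maximalIdeal R = Ideal.span {α}) :
    ringKrullDim R ≤ 1 := by
  have claim : ∀ q r : PrimeSpectrum R, q < r → q.asIdeal = ⊥ := by
    intro q r hqr
    have hql : q.asIdeal < r.asIdeal := hqr
    have hqm : q.asIdeal ≤ IsLocalRing.maximalIdeal R :=
      IsLocalRing.le_maximalIdeal q.2.ne_top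
    have hrm : r.asIdeal ≤ IsLocalRing.maximalIdeal R :=
      IsLocalRing.le_maximalIdeal r.2.ne_top
    have hαq : α ∉ q.asIdeal := by
      intro hα
      have h1 : IsLocalRing.maximalIdeal R ≤ q.asIdeal := by
        rw [hm, Ideal.span_le]; simpa using hα
      exact hql.not_ge (hrm.trans h1)
    have hpow : ∀ n : ℕ, q.asIdeal ≤ Ideal.span {α} ^ n := by
      intro n
      induction n with
      | zero => simp
      | succ n ih =>
        intro x hx
        obtain ⟨c, rfl⟩ := Ideal.mem_span_singleton.mp ((hqm.trans_eq hm) hx)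
        have hc : c ∈ q.asIdeal := (q.2.mem_or_mem hx).resolve_left hαq
        rw [pow_succ']
        exact Ideal.mul_mem_mul (Ideal.mem_span_singleton_self α) (ih hc)
    have hne : Ideal.span {α} ≠ ⊤ := by
      intro h
      exact (IsLocalRing.maximalIdeal.isMaximal R).ne_top (hm.trans h)
    have hbot : (⨅ n : ℕ, Ideal.span {α} ^ n) = ⊥ :=
      Ideal.iInf_pow_eq_bot_of_isDomain (I := Ideal.span {α}) hne
    exact le_bot_iff.mp (hbot ▸ le_iInf hpow)
  rw [ringKrullDim, Order.krullDim_eq_iSup_length]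
  refine (WithBot.coe_le_coe (b := (1 : ℕ∞))).mpr ?_
  refine iSup_le fun l => ?_
  suffices h : l.length ≤ 1 by exact_mod_cast h
  by_contra hl
  push_neg at hl
  have h01 : l.toFun ⟨0, by omega⟩ < l.toFun ⟨1, by omega⟩ :=
    l.strictMono (by exact Fin.mk_lt_mk.mpr one_pos)
  have h12 : l.toFun ⟨1, by omega⟩ < l.toFun ⟨2, by omega⟩ :=
    l.strictMono (by exact Fin.mk_lt_mk.mpr one_lt_two)
  have e1 := claim _ _ h01
  have e2 := claim _ _ h12
  have : (l.toFun ⟨0, by omega⟩).asIdeal < (l.toFun ⟨1, by omega⟩).asIdeal := h01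
  rw [e1, e2] at this
  exact lt_irrefl _ this

/-- Key algebraic lemma: if `f` in the fraction field is not in `A`, then there is a prime
`p` containing the denominator ideal of `f` such that the localization at `p` has Krull
dimension at most 1.  (Integral closedness is used through the hypothesis `hic`.) -/
theorem hartogs_aux (f : K) (hf : f ∉ (algebraMap A K).range)
    (hic : ∀ p : Ideal A, p.IsPrime → ∀ g : K, IsIntegral A g →
      ∃ a s : A, s ∉ p ∧ g * algebraMap A K s = algebraMap A K a) :
    ∃ p : Ideal A, ∃ hp : p.IsPrime, (hartogsDen f : Ideal A) ≤ p ∧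
      ringKrullDim (Localization.AtPrime p) ≤ 1 := by
  classical
  have hinj : Function.Injective (algebraMap A K) := IsFractionRing.injective A K
  -- the family of denominator ideals containing `hartogsDen f`
  set S : Set (Ideal A) :=
    {I | ∃ g : K, g ∉ (algebraMap A K).range ∧ (hartogsDen f : Ideal A) ≤ hartogsDen g ∧
      I = hartogsDen g} with hSdef
  have hS : S.Nonempty := ⟨hartogsDen f, f, hf, le_rfl, rfl⟩
  obtain ⟨M, ⟨g, hg, hfg, rfl⟩, hmax⟩ :=
    set_has_maximal_iff_noetherian.mpr (inferInstance : IsNoetherianRing A) S hS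
  set p : Ideal A := hartogsDen g with hpdef
  have hp1 : (1 : A) ∉ p := by
    rintro ⟨b, hb⟩
    exact hg ⟨b, by simpa using hb.symm⟩
  have hprime : p.IsPrime := by
    refine ⟨fun h => hp1 (h ▸ Submodule.mem_top), ?_⟩
    intro a b hab
    by_cases hb : b ∈ p
    · exact Or.inr hb
    · left
      have hbg : algebraMap A K b * g ∉ (algebraMap A K).range := by
        rintro ⟨c, hc⟩
        exact hb ⟨c, hc.symm⟩
      have h1 : p ≤ hartogsDen (algebraMap A K b * g) := by
        rintro x ⟨c, hc⟩
        exact ⟨b * c, by rw [map_mul, mul_comm (algebraMap A K b) g, ← mul_assoc, hc]; ring⟩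
      have h2 : (hartogsDen (algebraMap A K b * g) : Ideal A) ∈ S :=
        ⟨_, hbg, hfg.trans h1, rfl⟩
      have heq : (hartogsDen (algebraMap A K b * g) : Ideal A) = p := by
        by_contra hne
        exact hmax _ h2 (lt_of_le_of_ne h1 (Ne.symm hne))
      obtain ⟨c, hc⟩ := hab
      rw [← heq]
      exact ⟨c, by rw [← mul_assoc, ← map_mul, hc]⟩
  -- nontriviality of the denominator ideal
  obtain ⟨n₀, d₀, hd₀, hfn⟩ := IsFractionRing.div_surjective (A := A) f
  have hd₀0 : (d₀ : A) ≠ 0 := nonZeroDivisors.ne_zero hd₀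
  have hd₀mem : d₀ ∈ (hartogsDen f : Ideal A) := by
    refine ⟨n₀, ?_⟩
    have h0 : algebraMap A K d₀ ≠ 0 :=
      IsFractionRing.to_map_ne_zero_of_mem_nonZeroDivisors hd₀
    rw [← hfn, mul_div_assoc', mul_comm, mul_div_assoc, div_self h0, mul_one]
  -- main dichotomy
  by_cases hcase : ∀ a ∈ p, ∀ c : A, algebraMap A K a * g = algebraMap A K c → c ∈ p
  · -- `g` is integral over `A`, contradiction with `hic`
    exfalso
    have hint : IsIntegral A g := by
      refine isIntegral_of_smul_mem_submodule
        (Submodule.map (Algebra.linearMap A K) (p : Submodule A A)) ?_ ?_ g ?_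
      · intro h
        have : algebraMap A K d₀ ∈ Submodule.map (Algebra.linearMap A K) (p : Submodule A A) :=
          ⟨d₀, hfg hd₀mem, rfl⟩
        rw [h] at this
        simp only [Submodule.mem_bot] at this
        exact hd₀0 (hinj (by simpa using this))
      · exact Submodule.FG.map _ (IsNoetherian.noetherian _)
      · rintro _ ⟨a, ha, rfl⟩
        obtain ⟨c, hc⟩ := id ha
        refine ⟨c, hcase a ha c hc, ?_⟩
        simp only [Algebra.linearMap_apply, smul_eq_mul]
        rw [← hc, mul_comm]
    obtain ⟨a, s, hs, hgs⟩ := hic p hprime g hint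
    exact hs ⟨a, by rw [mul_comm]; exact hgs⟩
  · push_neg at hcase
    obtain ⟨a, ha, c, hc, hcp⟩ := hcase
    -- in the localization at `p`, the maximal ideal is generated by `a`
    haveI := hprime
    refine ⟨p, hprime, hfg, ?_⟩
    haveI : IsNoetherianRing (Localization.AtPrime p) :=
      IsLocalization.isNoetherianRing p.primeCompl (Localization.AtPrime p) inferInstance
    set R := Localization.AtPrime p with hRdef
    have hu : IsUnit (algebraMap A R c) :=
      IsLocalization.map_units R (⟨c, hcp⟩ : p.primeCompl)
    have hmax' : IsLocalRing.maximalIdeal R = Ideal.span {algebraMap A R a} := by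
      rw [← Localization.AtPrime.map_eq_maximalIdeal]
      apply le_antisymm
      · rw [Ideal.map_le_iff_le_comap]
        intro b hb
        obtain ⟨v, hv⟩ := hb
        have hkey : b * c = a * v := by
          apply hinj
          rw [map_mul, map_mul, ← hv, ← hc]
          ring
        simp only [Ideal.mem_comap]
        rw [Ideal.mem_span_singleton]
        have h2 : algebraMap A R a ∣ algebraMap A R c * algebraMap A R b := by
          refine ⟨algebraMap A R v, ?_⟩
          rw [← map_mul, ← map_mul, mul_comm c b, hkey]
        obtain ⟨d, hd⟩ := h2
        refine ⟨↑hu.unit⁻¹ * d, ?_⟩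
        calc algebraMap A R b
            = ↑hu.unit⁻¹ * (algebraMap A R c * algebraMap A R b) := by
              rw [← mul_assoc, hu.val_inv_mul, one_mul]
          _ = ↑hu.unit⁻¹ * (algebraMap A R a * d) := by rw [hd]
          _ = algebraMap A R a * (↑hu.unit⁻¹ * d) := by ring
      · rw [Ideal.span_le, Set.singleton_subset_iff]
        exact Ideal.mem_map_of_mem _ ha
    exact dim_le_one_of_principal_maximal _ hmax'

end Alg

open AlgebraicGeometry CategoryTheory TopologicalSpace Opposite

section SchemePart

variable {X : Scheme} [AlgebraicGeometry.IsNoetherian X] [IsIntegral X]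


lemma hartogs_fromSpec_mem {X : Scheme} {V : X.Opens} (hV : IsAffineOpen V)
    (q : PrimeSpectrum Γ(X, V)) : hV.fromSpec.base q ∈ V := by
  have h : hV.fromSpec.base q ∈ Set.range hV.fromSpec.base := ⟨q, rfl⟩
  rwa [hV.range_fromSpec] at h

lemma hartogs_nonempty {X : Scheme} (V : X.Opens) (x : X) (hx : x ∈ V) : Nonempty V :=
  ⟨⟨x, hx⟩⟩

lemma hartogs_generic_mem (V : X.Opens) [h : Nonempty V] : genericPoint X ∈ V :=
  ((genericPoint_spec X).mem_open_set_iff V.isOpen).mpr (by simpa using h)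

lemma hartogs_generic_mem' (V : X.Opens) (x : X) (hx : x ∈ V) : genericPoint X ∈ V :=
  haveI := hartogs_nonempty V x hx
  hartogs_generic_mem V

theorem hartogs_key (hnormal : ∀ x : X, IsIntegrallyClosed (X.presheaf.stalk x))
    (Z : Set X) (hcodim : ∀ z ∈ Z, 2 ≤ ringKrullDim (X.presheaf.stalk z))
    (V : X.Opens) (hV : IsAffineOpen V) [Nonempty V]
    (f : X.functionField)
    (hf : ∀ y : X, y ∉ Z →
      f ∈ (algebraMap (X.presheaf.stalk y) X.functionField).range) :
    ∃ t : Γ(X, V), X.germToFunctionField V t = f := by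
  haveI : IsNoetherianRing Γ(X, V) :=
    IsLocallyNoetherian.component_noetherian ⟨V, hV⟩
  haveI : IsFractionRing Γ(X, V) X.functionField :=
    functionField_isFractionRing_of_isAffineOpen X V hV
  by_contra hcon
  push_neg at hcon
  have hf' : f ∉ (algebraMap Γ(X, V) X.functionField).range := by
    rintro ⟨t, ht⟩
    exact hcon t ht
  -- membership in the stalk image at a prime gives a localized expression
  have hpt : ∀ (p : Ideal Γ(X, V)) (hp : p.IsPrime) (g : X.functionField),
      g ∈ (algebraMap (X.presheaf.stalk (hV.fromSpec.base ⟨p, hp⟩)) X.functionField).range →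
      ∃ a s : Γ(X, V), s ∉ p ∧
        g * algebraMap Γ(X, V) X.functionField s = algebraMap Γ(X, V) X.functionField a := by
    intro p hp g hg
    haveI := hp
    have hy : hV.fromSpec.base ⟨p, hp⟩ ∈ V := hartogs_fromSpec_mem hV ⟨p, hp⟩
    letI := X.presheaf.algebra_section_stalk ⟨hV.fromSpec.base ⟨p, hp⟩, hy⟩
    haveI loc : IsLocalization.AtPrime
        (X.presheaf.stalk (hV.fromSpec.base ⟨p, hp⟩)) p :=
      hV.isLocalization_stalk' ⟨p, hp⟩ hy
    haveI tower := functionField_isScalarTower X V ⟨hV.fromSpec.base ⟨p, hp⟩, hy⟩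
    obtain ⟨t, ht⟩ := hg
    obtain ⟨⟨a, s⟩, hmk⟩ := IsLocalization.mk'_surjective p.primeCompl t
    simp only at hmk
    refine ⟨a, s, s.2, ?_⟩
    rw [← ht,
      IsScalarTower.algebraMap_apply Γ(X, V)
        (X.presheaf.stalk (hV.fromSpec.base ⟨p, hp⟩)) X.functionField s,
      ← map_mul, ← hmk, IsLocalization.mk'_spec,
      ← IsScalarTower.algebraMap_apply]
  -- apply the algebraic lemma
  have hic : ∀ p : Ideal Γ(X, V), p.IsPrime → ∀ g : X.functionField, IsIntegral Γ(X, V) g →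
      ∃ a s : Γ(X, V), s ∉ p ∧
        g * algebraMap Γ(X, V) X.functionField s = algebraMap Γ(X, V) X.functionField a := by
    intro p hp g hg
    haveI := hp
    have hy : hV.fromSpec.base ⟨p, hp⟩ ∈ V := hartogs_fromSpec_mem hV ⟨p, hp⟩
    letI := X.presheaf.algebra_section_stalk ⟨hV.fromSpec.base ⟨p, hp⟩, hy⟩
    haveI tower := functionField_isScalarTower X V ⟨hV.fromSpec.base ⟨p, hp⟩, hy⟩
    have hint : IsIntegral (X.presheaf.stalk (hV.fromSpec.base ⟨p, hp⟩)) g :=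
      hg.tower_top
    have hmem : g ∈ (algebraMap (X.presheaf.stalk (hV.fromSpec.base ⟨p, hp⟩))
        X.functionField).range := by
      haveI := hnormal (hV.fromSpec.base ⟨p, hp⟩)
      obtain ⟨u, hu⟩ := IsIntegrallyClosed.isIntegral_iff.mp hint
      exact ⟨u, hu⟩
    exact hpt p hp g hmem
  obtain ⟨p, hp, hden, hdim⟩ := hartogs_aux (A := Γ(X, V)) f hf' hic
  haveI := hp
  have hy : hV.fromSpec.base ⟨p, hp⟩ ∈ V := hartogs_fromSpec_mem hV ⟨p, hp⟩
  letI := X.presheaf.algebra_section_stalk ⟨hV.fromSpec.base ⟨p, hp⟩, hy⟩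
  haveI loc : IsLocalization.AtPrime
      (X.presheaf.stalk (hV.fromSpec.base ⟨p, hp⟩)) p :=
    hV.isLocalization_stalk' ⟨p, hp⟩ hy
  have hdim' : ringKrullDim (X.presheaf.stalk (hV.fromSpec.base ⟨p, hp⟩)) ≤ 1 := by
    rw [ringKrullDim_eq_of_ringEquiv
      (IsLocalization.algEquiv p.primeCompl
        (X.presheaf.stalk (hV.fromSpec.base ⟨p, hp⟩))
        (Localization.AtPrime p)).toRingEquiv]
    exact hdim
  have hyZ : hV.fromSpec.base ⟨p, hp⟩ ∉ Z := by
    intro hyZ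
    have h2 := (hcodim _ hyZ).trans hdim'
    norm_num at h2
  obtain ⟨a, s, hs, hfs⟩ := hpt p hp f (hf _ hyZ)
  exact hs (hden ⟨a, by rw [mul_comm]; exact hfs⟩)

end SchemePart


/-- algebraic Hartogs' lemma. Let `X` be a Noetherian integral scheme which
is normal (all local rings are integrally closed domains), and let `Z ⊆ X` be a closed subset
of codimension at least `2` (every point of `Z` has local ring of Krull dimension `≥ 2`).
Then restriction of global sections of `O_X` to the open complement `X \ Z` is bijective. -/
theorem hartogs_extension {X : Scheme} [AlgebraicGeometry.IsNoetherian X] [IsIntegral X]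
    (hnormal : ∀ x : X, IsIntegrallyClosed (X.presheaf.stalk x))
    (Z : Set X) (hZ : IsClosed Z)
    (hcodim : ∀ z ∈ Z, 2 ≤ ringKrullDim (X.presheaf.stalk z)) :
    Function.Bijective
      (X.presheaf.map (homOfLE (le_top : (⟨Zᶜ, hZ.isOpen_compl⟩ : Opens X) ≤ ⊤)).op) := by
  classical
  set U : X.Opens := ⟨Zᶜ, hZ.isOpen_compl⟩ with hUdef
  have hηZ : genericPoint X ∉ Z := by
    intro h
    have h2 := hcodim _ h
    have h0 : ringKrullDim (X.presheaf.stalk (genericPoint X)) = 0 :=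
      ringKrullDim_eq_zero_of_field _
    rw [h0] at h2
    norm_num at h2
  have hηU : genericPoint X ∈ U := hηZ
  haveI : Nonempty U := ⟨⟨_, hηU⟩⟩
  haveI : Nonempty (⊤ : X.Opens) := ⟨⟨genericPoint X, trivial⟩⟩
  constructor
  · intro a b hab
    apply germ_injective_of_isIntegral X (U := ⊤) (genericPoint X) trivial
    have h := congrArg (X.presheaf.germ U (genericPoint X) hηU) hab
    rwa [TopCat.Presheaf.germ_res_apply, TopCat.Presheaf.germ_res_apply] at h
  · intro s
    set f : X.functionField := X.presheaf.germ U (genericPoint X) hηU s with hfdef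
    have hstalk : ∀ y : X, y ∉ Z →
        f ∈ (algebraMap (X.presheaf.stalk y) X.functionField).range := by
      intro y hy
      refine ⟨X.presheaf.germ U y hy s, ?_⟩
      rw [RingHom.algebraMap_toAlgebra]
      exact X.presheaf.germ_stalkSpecializes_apply
        ((genericPoint_spec X).specializes trivial) (U := U) (hy := hy) s
    have key' : ∀ x : X, ∃ t : Γ(X, (X.affineCover.f (X.affineCover.idx x)).opensRange),
        X.presheaf.germ _ (genericPoint X)
          (hartogs_generic_mem' _ x (X.affineCover.covers x)) t = f := by
      intro x
      haveI := hartogs_nonempty ((X.affineCover.f (X.affineCover.idx x)).opensRange) x (X.affineCover.covers x)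
      exact hartogs_key hnormal Z hcodim _ (isAffineOpen_opensRange _) f hstalk
    choose t ht using key'
    set Vfam : X → X.Opens := fun x => (X.affineCover.f (X.affineCover.idx x)).opensRange with hVfam
    haveI hNe : ∀ x : X, Nonempty (Vfam x) :=
      fun x => hartogs_nonempty (Vfam x) x (X.affineCover.covers x)
    have hcover : (⊤ : X.Opens) ≤ iSup Vfam := fun ξ _ =>
      Opens.mem_iSup.mpr ⟨ξ, X.affineCover.covers ξ⟩
    have hcompat : TopCat.Presheaf.IsCompatible X.presheaf Vfam t := by
      intro i j
      haveI := hartogs_nonempty (Vfam i ⊓ Vfam j) (genericPoint X)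
        ⟨hartogs_generic_mem (Vfam i), hartogs_generic_mem (Vfam j)⟩
      apply X.germToFunctionField_injective (Vfam i ⊓ Vfam j)
      show X.presheaf.germ _ (genericPoint X) (hartogs_generic_mem _) _
        = X.presheaf.germ _ (genericPoint X) (hartogs_generic_mem _) _
      rw [TopCat.Presheaf.germ_res_apply, TopCat.Presheaf.germ_res_apply]
      exact (ht i).trans (ht j).symm
    obtain ⟨T, hT, -⟩ := X.sheaf.existsUnique_gluing' Vfam ⊤
      (fun i => homOfLE le_top) hcover t hcompat
    refine ⟨T, ?_⟩
    apply X.germToFunctionField_injective U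
    obtain ⟨x₀⟩ : Nonempty X := inferInstance
    have hT' : X.presheaf.map (homOfLE (le_top : Vfam x₀ ≤ ⊤)).op T = t x₀ := hT x₀
    show X.presheaf.germ U (genericPoint X) (hartogs_generic_mem U)
        (X.presheaf.map (homOfLE le_top).op T)
      = X.presheaf.germ U (genericPoint X) (hartogs_generic_mem U) s
    erw [TopCat.Presheaf.germ_res_apply]
    have h5 := congrArg
      (X.presheaf.germ (Vfam x₀) (genericPoint X) (hartogs_generic_mem (Vfam x₀))) hT'
    erw [TopCat.Presheaf.germ_res_apply] at h5
    exact h5.trans (ht x₀)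
end
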